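/- Let M be a topological 2-manifold, φ a flow on M, and C ⊆ M a countable set. Then the saturation ⋃_{t ∈ ℝ} φ(t, C) is meager in M, and its complement is a dense Gδ subset of M. -/

import Mathlib

/-!
The periods of a point form a closed subgroup of `ℝ`: either all of `ℝ` (a fixed point) or a
discrete subgroup, and then the orbit map is injective on all sufficiently short intervals.
So a countable union of orbits is a countable union of compact arcs. Such an arc is closed and
embeds in `ℝ`, so it has empty interior: a nonempty open subset of the surface contains a
continuous injective image of `ℝ²`, while `ℝ²` has no continuous injection `g` into `ℝ`:
if `g m` lies strictly between two values of `g`, the connected set `ℝ² \ {m}` takes it as well.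
Baire's theorem gives the rest.
-/

open Set Topology

/-- `M` is a topological 2-manifold: a Hausdorff, second-countable space in which every point
has an open neighborhood homeomorphic to an open subset of `ℝ²`. -/
def IsTwoManifold (M : Type*) [TopologicalSpace M] : Prop :=
  T2Space M ∧ SecondCountableTopology M ∧
    ∀ x : M, ∃ U : Set M, x ∈ U ∧ IsOpen U ∧
      ∃ V : Set (ℝ × ℝ), IsOpen V ∧ Nonempty (U ≃ₜ V)

open Function

section NoInjection

variable {α : Type*} [LinearOrder α] [DenselyOrdered α] [TopologicalSpace α]
  [OrderClosedTopology α]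

theorem subsingleton_of_continuous_injective {X : Type*} [TopologicalSpace X]
    [PreconnectedSpace X] (hX : ∀ x : X, IsPreconnected ({x}ᶜ : Set X)) {g : X → α}
    (hg : Continuous g) (hinj : Injective g) : Subsingleton X := by
  suffices key : ∀ a b : X, ¬ g a < g b from
    ⟨fun a b => hinj (le_antisymm (not_lt.1 (key b a)) (not_lt.1 (key a b)))⟩
  intro a b hab
  obtain ⟨v, hav, hvb⟩ := exists_between hab
  obtain ⟨m, rfl⟩ : v ∈ range g :=
    (isPreconnected_range hg).Icc_subset (mem_range_self a) (mem_range_self b) ⟨hav.le, hvb.le⟩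
  obtain ⟨w, hwm, hw⟩ : g m ∈ g '' {m}ᶜ :=
    ((hX m).image g hg.continuousOn).Icc_subset (mem_image_of_mem g (ne_of_apply_ne g hav.ne))
      (mem_image_of_mem g (ne_of_apply_ne g hvb.ne')) ⟨hav.le, hvb.le⟩
  exact hwm (hinj hw)

theorem not_injective_of_one_lt_rank {E : Type*} [NormedAddCommGroup E] [NormedSpace ℝ E]
    (hE : 1 < Module.rank ℝ E) {g : E → α} (hg : Continuous g) : ¬ Injective g := by
  intro hinj
  have : Nontrivial E := rank_pos_iff_nontrivial.1 (zero_lt_one.trans hE)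
  exact not_subsingleton E <| subsingleton_of_continuous_injective
    (fun x => (isConnected_compl_singleton_of_one_lt_rank hE x).isPreconnected) hg hinj

end NoInjection

namespace IsTwoManifold

variable {M : Type*} [TopologicalSpace M]

theorem exists_isOpenEmbedding (hM : IsTwoManifold M) (x : M) :
    ∃ V : Set (ℝ × ℝ), IsOpen V ∧ ∃ j : V → M, IsOpenEmbedding j ∧ x ∈ range j := by
  obtain ⟨U, hxU, hU, V, hV, ⟨h⟩⟩ := hM.2.2 x
  exact ⟨V, hV, _, hU.isOpenEmbedding_subtypeVal.comp h.symm.isOpenEmbedding,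
    h ⟨x, hxU⟩, by simp⟩

theorem weaklyLocallyCompactSpace (hM : IsTwoManifold M) : WeaklyLocallyCompactSpace M := by
  refine ⟨fun x => ?_⟩
  obtain ⟨V, hV, j, hj, v, rfl⟩ := hM.exists_isOpenEmbedding x
  have : LocallyCompactSpace V := hV.locallyCompactSpace
  obtain ⟨K, hK, hKv⟩ := exists_compact_mem_nhds v
  exact ⟨j '' K, hK.image hj.continuous, hj.isOpenMap.image_mem_nhds hKv⟩

theorem exists_continuous_injective_range_subset (hM : IsTwoManifold M) {O : Set M}
    (hO : IsOpen O) (hne : O.Nonempty) :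
    ∃ e : ℝ × ℝ → M, Continuous e ∧ Injective e ∧ range e ⊆ O := by
  obtain ⟨x, hx⟩ := hne
  obtain ⟨V, hV, j, hj, c, rfl⟩ := hM.exists_isOpenEmbedding x
  obtain ⟨r, hr, hball⟩ : ∃ r > 0, Metric.ball (c : ℝ × ℝ) r ⊆ (↑) '' (j ⁻¹' O) :=
    Metric.isOpen_iff.1 (hV.isOpenEmbedding_subtypeVal.isOpenMap _ (hO.preimage hj.continuous))
      _ ⟨c, hx, rfl⟩
  set ι : OpenPartialHomeomorph (ℝ × ℝ) (ℝ × ℝ) := .univBall (c : ℝ × ℝ) r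
  have hιO : ∀ p, ι p ∈ (↑) '' (j ⁻¹' O) := fun p => hball <| by
    rw [← OpenPartialHomeomorph.univBall_target _ hr]
    exact ι.map_source (by simp [ι])
  have hιV : ∀ p, ι p ∈ V := fun p => by simpa using image_subset_range _ _ (hιO p)
  refine ⟨fun p => j ⟨ι p, hιV p⟩, ?_, ?_, ?_⟩
  · exact hj.continuous.comp ((OpenPartialHomeomorph.continuous_univBall _ _).subtype_mk _)
  · intro p q hpq
    exact ι.injOn (by simp [ι]) (by simp [ι]) (congrArg Subtype.val (hj.injective hpq))
  · rintro _ ⟨p, rfl⟩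
    obtain ⟨v, hv, hvp⟩ := hιO p
    obtain rfl : v = ⟨ι p, hιV p⟩ := Subtype.ext hvp
    exact hv

theorem interior_eq_empty_of_continuous_injective (hM : IsTwoManifold M) {P : Set M}
    {α : Type*} [LinearOrder α] [DenselyOrdered α] [TopologicalSpace α] [OrderClosedTopology α]
    {ψ : P → α} (hψ : Continuous ψ) (hinj : Injective ψ) : interior P = ∅ := by
  by_contra hne
  obtain ⟨e, he, heinj, heP⟩ := hM.exists_continuous_injective_range_subset isOpen_interior
    (nonempty_iff_ne_empty.2 hne)
  have hrank : 1 < Module.rank ℝ (ℝ × ℝ) := by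
    rw [rank_prod', Module.rank_self]
    norm_num
  set e' : ℝ × ℝ → P := codRestrict e P fun p => interior_subset (heP ⟨p, rfl⟩)
  exact not_injective_of_one_lt_rank hrank (g := ψ ∘ e') (hψ.comp (he.codRestrict _))
    (hinj.comp ((injective_codRestrict _).2 heinj))

theorem interior_image_eq_empty (hM : IsTwoManifold M) {f : ℝ → M} (hf : Continuous f)
    {K : Set ℝ} (hK : IsCompact K) (hinj : InjOn f K) : interior (f '' K) = ∅ := by
  have := hM.1
  have : CompactSpace K := isCompact_iff_compactSpace.1 hK
  have hemb := (hf.comp continuous_subtype_val).isClosedEmbedding hinj.injective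
  set e : K ≃ₜ f '' K := hemb.isEmbedding.toHomeomorph.trans
    (Homeomorph.setCongr (range_domRestrict f K))
  exact hM.interior_eq_empty_of_continuous_injective (ψ := fun p => (e.symm p : ℝ))
    (continuous_subtype_val.comp e.symm.continuous) (Subtype.val_injective.comp e.symm.injective)

end IsTwoManifold

namespace Flow

variable {τ α : Type*} [TopologicalSpace τ] [AddCommGroup τ]
  [TopologicalSpace α] (φ : Flow τ α) (x : α)

def periods : AddSubgroup τ where
  carrier := {t | φ t x = x}
  add_mem' {s t} (hs : φ s x = x) (ht : φ t x = x) := show φ (s + t) x = x by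
    rw [map_add, ht, hs]
  zero_mem' := φ.map_zero_apply x
  neg_mem' {t} (ht : φ t x = x) := show φ (-t) x = x by
    conv_lhs => rw [← ht, ← map_add, neg_add_cancel, map_zero_apply]

theorem mem_periods {t : τ} : t ∈ φ.periods x ↔ φ t x = x := Iff.rfl

theorem sub_mem_periods_of_apply_eq {s t : τ} (h : φ s x = φ t x) : s - t ∈ φ.periods x := by
  rw [mem_periods, sub_eq_neg_add, map_add, h, ← map_add, neg_add_cancel, map_zero_apply]

theorem isClosed_periods [T1Space α] : IsClosed (φ.periods x : Set τ) :=
  isClosed_singleton.preimage (φ.continuous continuous_id continuous_const)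

theorem injOn_Icc_of_forall_periods_notMem_Ioo (φ : Flow ℝ α) {ε : ℝ}
    (hε : ∀ t ∈ φ.periods x, t ∉ Ioo 0 ε) {a b : ℝ} (hab : b - a < ε) :
    InjOn (φ · x) (Icc a b) := by
  intro s hs t ht hst
  by_contra hne
  rcases lt_or_gt_of_ne hne with h | h
  · exact hε _ (φ.sub_mem_periods_of_apply_eq x hst.symm) ⟨sub_pos.2 h, by linarith [hs.1, ht.2]⟩
  · exact hε _ (φ.sub_mem_periods_of_apply_eq x hst) ⟨sub_pos.2 h, by linarith [hs.2, ht.1]⟩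

theorem exists_isCompact_injOn_iUnion_image_eq_range [T1Space α] (φ : Flow ℝ α) :
    ∃ K : ℤ → Set ℝ, (∀ n, IsCompact (K n) ∧ InjOn (φ · x) (K n)) ∧
      ⋃ n, (φ · x) '' K n = range (φ · x) := by
  by_cases hdense : Dense (φ.periods x : Set ℝ)
  · have hfix : ∀ t, φ t x = x := by
      have : (φ.periods x : Set ℝ) = univ := (φ.isClosed_periods x).closure_eq ▸ hdense.closure_eq
      exact fun t => (φ.mem_periods x).1 (eq_univ_iff_forall.1 this t)
    refine ⟨fun _ => {0}, fun _ => ⟨isCompact_singleton, injOn_singleton _ _⟩, ?_⟩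
    simp [hfix]
  · obtain ⟨ε, hε, hper⟩ : ∃ ε > 0, ∀ t ∈ φ.periods x, t ∉ Ioo 0 ε := by
      contrapose! hdense
      exact (φ.periods x).dense_of_not_isolated_zero hdense
    refine ⟨fun n => Icc (n • (ε / 2)) ((n + 1) • (ε / 2)), fun n => ⟨isCompact_Icc,
      φ.injOn_Icc_of_forall_periods_notMem_Ioo x hper ?_⟩, ?_⟩
    · rw [add_smul, one_smul, add_sub_cancel_left]
      linarith
    · rw [← image_iUnion, iUnion_Icc_zsmul (half_pos hε), image_univ]

end Flow

/-- The saturation of a countable set under a flow on a topological 2-manifold is meager,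
and its complement is a dense Gδ set. -/
theorem saturation_of_countable_isMeagre
    {M : Type*} [TopologicalSpace M] (hM : IsTwoManifold M)
    (φ : Flow ℝ M) (C : Set M) (hC : C.Countable) :
    IsMeagre (⋃ t : ℝ, (fun x => φ t x) '' C) ∧
      Dense (⋃ t : ℝ, (fun x => φ t x) '' C)ᶜ ∧
      IsGδ (⋃ t : ℝ, (fun x => φ t x) '' C)ᶜ := by
  have := hM.1
  have := hM.weaklyLocallyCompactSpace
  have := hC.to_subtype
  have horbit (c : M) : Continuous (φ · c) := φ.continuous continuous_id continuous_const
  choose K hK hcover using fun c : C => φ.exists_isCompact_injOn_iUnion_image_eq_range c.1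
  set A : C → ℤ → Set M := fun c n => (φ · c) '' K c n
  have hsat : ⋃ t : ℝ, (fun x => φ t x) '' C = ⋃ c, ⋃ n, A c n := by
    ext y
    simp only [A, hcover, mem_iUnion, mem_image, mem_range, Subtype.exists, exists_prop]
    tauto
  have hclosed (c : C) (n : ℤ) : IsClosed (A c n) :=
    ((hK c n).1.image (horbit c)).isClosed
  have hmeagre : IsMeagre (⋃ c, ⋃ n, A c n) :=
    isMeagre_iUnion fun c => isMeagre_iUnion fun n => ((hclosed c n).isNowhereDense_iff.2 <|
      hM.interior_image_eq_empty (horbit c) (hK c n).1 (hK c n).2).isMeagre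
  rw [hsat]
  refine ⟨hmeagre, dense_of_mem_residual hmeagre, ?_⟩
  simp only [compl_iUnion]
  exact .iInter fun c => .iInter_of_isOpen fun n => (hclosed c n).isOpen_compl
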